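/- arXiv:2204.02847 — 2 statements merged into one kernel-verified Lean document; each statement's English description precedes it below -/
import Mathlib

section
/- Let k be a field, X = X′ ⊕ J_1 and Y = Y′ ⊕ J_1, where X′ = ⊕_{i=1}^{r} J_{p_i} and Y′ = ⊕_{j=1}^{s} J_{q_j} are finite direct sums with arbitrary integers p_i, q_j ≥ 1 (r, s ≥ 0 allowed). Let C : X → Y be a k[T]-linear map with T²∘C = 0, and assume that the component of C from the distinguished summand J_1 of X to the distinguished summand J_1 of Y is nonzero. Then there exist a k[T]-linear map C′ : X′ → Y′ with T²∘C′ = 0 and k[T]-module isomorphisms α : X → X′ ⊕ J_1 and β : Y → Y′ ⊕ J_1 such that β∘C = (C′ ⊕ id_{J_1})∘α. In particular, the triple (X, Y, C) has a direct summand isomorphic to (J_1, J_1, id_{J_1}). -/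
open Polynomial

/-- `J k a` is the `k[T]`-module `k[T]/(T^a)` (with `T` the polynomial variable `X`). -/
abbrev J (k : Type*) [Field k] (a : ℕ) : Type _ :=
  Polynomial k ⧸ Ideal.span {(X : Polynomial k) ^ a}

set_option maxHeartbeats 1000000

/-- Splitting off a `(J_1, J_1, id)` summand: if `C : X' ⊕ J_1 → Y' ⊕ J_1` satisfies
`T² ∘ C = 0` and its component from the distinguished `J_1` of `X` to the distinguished
`J_1` of `Y` is nonzero, then after suitable isomorphisms `C` is the direct sum of a map
`C' : X' → Y'` (with `T² ∘ C' = 0`) and `id : J_1 → J_1`. -/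
theorem split_off_J1_J1 (k : Type*) [Field k] (r s : ℕ) (p : Fin r → ℕ) (q : Fin s → ℕ)
    (hp : ∀ i, 1 ≤ p i) (hq : ∀ j, 1 ≤ q j)
    (C : (((i : Fin r) → J k (p i)) × J k 1) →ₗ[Polynomial k]
      (((j : Fin s) → J k (q j)) × J k 1))
    (hC : ∀ x, ((X : Polynomial k) ^ 2) • C x = 0)
    (hcomp : (LinearMap.snd (Polynomial k) ((j : Fin s) → J k (q j)) (J k 1)) ∘ₗ C ∘ₗ
      (LinearMap.inr (Polynomial k) ((i : Fin r) → J k (p i)) (J k 1)) ≠ 0) :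
    ∃ C' : ((i : Fin r) → J k (p i)) →ₗ[Polynomial k] ((j : Fin s) → J k (q j)),
      (∀ x, ((X : Polynomial k) ^ 2) • C' x = 0) ∧
      ∃ (α : (((i : Fin r) → J k (p i)) × J k 1) ≃ₗ[Polynomial k]
          (((i : Fin r) → J k (p i)) × J k 1))
        (β : (((j : Fin s) → J k (q j)) × J k 1) ≃ₗ[Polynomial k]
          (((j : Fin s) → J k (q j)) × J k 1)),
        β.toLinearMap ∘ₗ C = (C'.prodMap (LinearMap.id : J k 1 →ₗ[Polynomial k] J k 1)) ∘ₗ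
          α.toLinearMap := by
  classical
  set X' := (i : Fin r) → J k (p i) with hX'
  set Y' := (j : Fin s) → J k (q j) with hY'
  -- components of C
  set A : X' →ₗ[Polynomial k] Y' :=
    (LinearMap.fst (Polynomial k) Y' (J k 1)) ∘ₗ C ∘ₗ (LinearMap.inl (Polynomial k) X' (J k 1))
    with hA
  set b : J k 1 →ₗ[Polynomial k] Y' :=
    (LinearMap.fst (Polynomial k) Y' (J k 1)) ∘ₗ C ∘ₗ (LinearMap.inr (Polynomial k) X' (J k 1))
    with hb
  set c : X' →ₗ[Polynomial k] J k 1 :=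
    (LinearMap.snd (Polynomial k) Y' (J k 1)) ∘ₗ C ∘ₗ (LinearMap.inl (Polynomial k) X' (J k 1))
    with hc
  set d : J k 1 →ₗ[Polynomial k] J k 1 :=
    (LinearMap.snd (Polynomial k) Y' (J k 1)) ∘ₗ C ∘ₗ (LinearMap.inr (Polynomial k) X' (J k 1))
    with hd
  -- scalar action on `J k 1` is multiplication by the image in the quotient
  have hsmul : ∀ (f : Polynomial k) (w : J k 1),
      f • w = Ideal.Quotient.mk _ f * w := by
    intro f w
    obtain ⟨a, rfl⟩ := Ideal.Quotient.mk_surjective w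
    show Ideal.Quotient.mk _ (f • a) = _
    rw [smul_eq_mul, map_mul]
  -- any endomorphism of `J k 1` is multiplication by its value at 1
  have hend : ∀ (f : J k 1 →ₗ[Polynomial k] J k 1) (z : J k 1), f z = z * f 1 := by
    intro f z
    obtain ⟨g, rfl⟩ := Ideal.Quotient.mk_surjective z
    have h1 : (Ideal.Quotient.mk (Ideal.span {(X : Polynomial k) ^ 1})) g
        = g • (1 : J k 1) := by rw [hsmul, mul_one]
    rw [h1, map_smul, hsmul, hsmul, mul_one]
  -- the ideal (X) is maximal, so J k 1 is a field
  haveI hmax : (Ideal.span {(X : Polynomial k) ^ 1}).IsMaximal := by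
    rw [pow_one]
    exact PrincipalIdealRing.isMaximal_of_irreducible Polynomial.irreducible_X
  set u : J k 1 := d 1 with hu
  have hune : u ≠ 0 := by
    intro h0
    refine hcomp (LinearMap.ext fun z => ?_)
    show d z = 0
    rw [hend d z, ← hu, h0, mul_zero]
  obtain ⟨v, hvu⟩ := Ideal.Quotient.exists_inv hune
  -- multiplication maps by v and u
  have hmul_lin : ∀ w0 : J k 1, ∀ (f : Polynomial k) (z : J k 1),
      f • (w0 * z) = w0 * (f • z) := by
    intro w0 f z
    rw [hsmul, hsmul, mul_left_comm]
  set mv : J k 1 →ₗ[Polynomial k] J k 1 :=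
    { toFun := fun z => v * z
      map_add' := fun a₁ a₂ => mul_add _ _ _
      map_smul' := fun f z => (hmul_lin v f z).symm } with hmv
  set mu : J k 1 →ₗ[Polynomial k] J k 1 :=
    { toFun := fun z => u * z
      map_add' := fun a₁ a₂ => mul_add _ _ _
      map_smul' := fun f z => (hmul_lin u f z).symm } with hmu
  have hmvmu : ∀ z : J k 1, mv (mu z) = z := by
    intro z
    show v * (u * z) = z
    rw [← mul_assoc, mul_comm v u, hvu, one_mul]
  have hmumv : ∀ z : J k 1, mu (mv z) = z := by
    intro z
    show u * (v * z) = z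
    rw [← mul_assoc, hvu, one_mul]
  -- the candidate map C'
  set C' : X' →ₗ[Polynomial k] Y' := A - b ∘ₗ mv ∘ₗ c with hC'
  have hCxz : ∀ (x : X') (z : J k 1), C (x, z) = (A x + b z, c x + d z) := by
    intro x z
    have h1 : (x, z) = ((x, 0) : X' × J k 1) + (0, z) := by simp
    rw [h1, map_add]
    rfl
  refine ⟨C', ?_, ?_⟩
  · -- T² ∘ C' = 0
    intro x
    rw [hC']
    simp only [LinearMap.sub_apply, LinearMap.comp_apply, LinearMap.fst_apply,
      LinearMap.inl_apply, LinearMap.inr_apply, hA, hb, smul_sub]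
    rw [← Prod.smul_fst, ← Prod.smul_fst, hC, hC]
    simp
  · -- the isomorphisms
    set fstX := LinearMap.fst (Polynomial k) X' (J k 1)
    set sndX := LinearMap.snd (Polynomial k) X' (J k 1)
    set fstY := LinearMap.fst (Polynomial k) Y' (J k 1)
    set sndY := LinearMap.snd (Polynomial k) Y' (J k 1)
    set αf : (X' × J k 1) →ₗ[Polynomial k] (X' × J k 1) :=
      fstX.prod (sndX + mv ∘ₗ c ∘ₗ fstX) with hαf
    set αg : (X' × J k 1) →ₗ[Polynomial k] (X' × J k 1) :=
      fstX.prod (sndX - mv ∘ₗ c ∘ₗ fstX) with hαg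
    have hα1 : αf ∘ₗ αg = LinearMap.id := by
      refine LinearMap.ext fun w => ?_
      show (w.1, (w.2 - mv (c w.1)) + mv (c w.1)) = w
      rw [sub_add_cancel]
    have hα2 : αg ∘ₗ αf = LinearMap.id := by
      refine LinearMap.ext fun w => ?_
      show (w.1, (w.2 + mv (c w.1)) - mv (c w.1)) = w
      rw [add_sub_cancel_right]
    set α : (X' × J k 1) ≃ₗ[Polynomial k] (X' × J k 1) :=
      LinearEquiv.ofLinear αf αg hα1 hα2 with hα
    set βf : (Y' × J k 1) →ₗ[Polynomial k] (Y' × J k 1) :=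
      (fstY - b ∘ₗ mv ∘ₗ sndY).prod (mv ∘ₗ sndY) with hβf
    set βg : (Y' × J k 1) →ₗ[Polynomial k] (Y' × J k 1) :=
      (fstY + b ∘ₗ sndY).prod (mu ∘ₗ sndY) with hβg
    have hβ1 : βf ∘ₗ βg = LinearMap.id := by
      refine LinearMap.ext fun w => ?_
      show ((w.1 + b w.2) - b (mv (mu w.2)), mv (mu w.2)) = w
      rw [hmvmu, add_sub_cancel_right]
    have hβ2 : βg ∘ₗ βf = LinearMap.id := by
      refine LinearMap.ext fun w => ?_
      show ((w.1 - b (mv w.2)) + b (mv w.2), mu (mv w.2)) = w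
      rw [hmumv, sub_add_cancel]
    set β : (Y' × J k 1) ≃ₗ[Polynomial k] (Y' × J k 1) :=
      LinearEquiv.ofLinear βf βg hβ1 hβ2 with hβ
    refine ⟨α, β, ?_⟩
    refine LinearMap.ext fun w => ?_
    obtain ⟨x, z⟩ := w
    show βf (C (x, z)) = (C'.prodMap LinearMap.id) (αf (x, z))
    rw [hCxz]
    have hmvd : mv (d z) = z := by
      show v * d z = z
      rw [hend d z, ← hu, ← mul_assoc, mul_comm v z, mul_assoc, mul_comm v u, hvu, mul_one]
    show ((A x + b z) - b (mv (c x + d z)), mv (c x + d z))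
      = (C' x, z + mv (c x))
    have h4 : mv (c x + d z) = mv (c x) + z := by rw [map_add, hmvd]
    rw [h4]
    refine Prod.ext ?_ (add_comm _ _)
    show (A x + b z) - b (mv (c x) + z) = A x - b (mv (c x))
    rw [map_add]
    abel
end

section
/- Let k be a field and a, b ≥ 2 integers. Let X = X′ ⊕ J_a with X′ = ⊕_{i=1}^{r} J_{p_i} where every p_i ≥ a, and Y = Y′ ⊕ J_b with Y′ = ⊕_{j=1}^{s} J_{q_j} where every q_j ≥ b (r, s ≥ 0 allowed). Let C : X → Y be a k[T]-linear map with T²∘C = 0, and assume that the component c : J_a → J_b of C between the distinguished summands satisfies T∘c ≠ 0. Then there exist a k[T]-linear map C′ : X′ → Y′ with T²∘C′ = 0 and k[T]-module isomorphisms α : X → X′ ⊕ J_a and β : Y → Y′ ⊕ J_b such that β∘C = (C′ ⊕ τ)∘α, where τ : J_a → J_b is multiplication by T^{b−2}. In particular, the triple (X, Y, C) has a direct summand isomorphic to (J_a, J_b, τ). -/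
/-!
Write `C` as a block matrix `[[A, B], [D, c]]`. Since `T² c = 0`, `c 1 = T^{b-2} g`, and `T c ≠ 0`
forces `T ∤ g`, so `g` is a unit modulo `T^a` and `c = τ ∘ μ` for an automorphism `μ` of `J_a`.
As `p_i ≥ a`, the `T²`-torsion block `D` factors as `τ ∘ F`; as `q_j ≥ b`, `B ∘ μ⁻¹` factors
as `E ∘ τ`, i.e. `B = E ∘ c`. The column operation `(x, t) ↦ (x, μ t + F x)` and the row
operation `(y, u) ↦ (y - E u, u)` then clear the off-diagonal blocks, leaving `(A - E ∘ D) ⊕ τ`.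
-/

open Polynomial

/-- Multiplication by `T^e` as a `k[T]`-linear map `J_a → J_b`; it is well defined
when `b ≤ e + a`, and we set it to `0` otherwise. -/
noncomputable def mulTpow (k : Type*) [Field k] (a b e : ℕ) :
    J k a →ₗ[Polynomial k] J k b :=
  if h : b ≤ e + a then
    Submodule.liftQ (Ideal.span {(X : Polynomial k) ^ a})
      ((Ideal.span {(X : Polynomial k) ^ b}).mkQ ∘ₗ
        ((X : Polynomial k) ^ e • (LinearMap.id : Polynomial k →ₗ[Polynomial k] Polynomial k)))
      (by
        refine Submodule.span_le.mpr ?_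
        intro x hx
        rw [Set.mem_singleton_iff] at hx
        subst hx
        simp only [SetLike.mem_coe, LinearMap.mem_ker, LinearMap.comp_apply,
          LinearMap.smul_apply, LinearMap.id_apply, Submodule.mkQ_apply,
          Submodule.Quotient.mk_eq_zero, smul_eq_mul]
        exact Ideal.mem_span_singleton.mpr (by
          rw [← pow_add]; exact pow_dvd_pow X h))
  else 0

namespace J

variable {k : Type*} [Field k] {m : ℕ}

noncomputable def lift {M : Type*} [AddCommGroup M] [Module k[X] M] (y : M)
    (hy : (X : k[X]) ^ m • y = 0) : J k m →ₗ[k[X]] M :=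
  Submodule.liftQSpanSingleton _ (LinearMap.toSpanSingleton k[X] M y) hy

@[simp]
lemma lift_mk {M : Type*} [AddCommGroup M] [Module k[X] M] (y : M)
    (hy : (X : k[X]) ^ m • y = 0) (f : k[X]) :
    lift y hy (Submodule.Quotient.mk f) = f • y :=
  rfl

lemma hom_ext {M : Type*} [AddCommGroup M] [Module k[X] M] {φ ψ : J k m →ₗ[k[X]] M}
    (h : φ (Submodule.Quotient.mk 1) = ψ (Submodule.Quotient.mk 1)) : φ = ψ :=
  Submodule.linearMap_qext _ (LinearMap.ext_ring h)

lemma X_pow_smul_mk_eq_zero {n : ℕ} (h : m ≤ n) (f : k[X]) :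
    (X : k[X]) ^ n • (Submodule.Quotient.mk f : J k m) = 0 := by
  rw [← Submodule.Quotient.mk_smul, Submodule.Quotient.mk_eq_zero, smul_eq_mul]
  exact Ideal.mem_span_singleton.mpr ((pow_dvd_pow X h).mul_right f)

lemma exists_eq_mk_X_pow_mul {c : ℕ} (hc : c ≤ m) (v : J k m) (h : (X : k[X]) ^ c • v = 0) :
    ∃ f : k[X], v = Submodule.Quotient.mk (X ^ (m - c) * f) := by
  obtain ⟨g, rfl⟩ := Submodule.Quotient.mk_surjective _ v
  rw [← Submodule.Quotient.mk_smul, Submodule.Quotient.mk_eq_zero, smul_eq_mul,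
    Ideal.mem_span_singleton] at h
  obtain ⟨f, hf⟩ := h
  refine ⟨f, congrArg _ (mul_left_cancel₀ (pow_ne_zero c X_ne_zero) ?_)⟩
  rw [hf, ← mul_assoc, ← pow_add, Nat.add_sub_cancel' hc]

end J

open J

section

variable {k : Type*} [Field k]

lemma mulTpow_mk {a b e : ℕ} (h : b ≤ e + a) (f : k[X]) :
    mulTpow k a b e (Submodule.Quotient.mk f) = Submodule.Quotient.mk (X ^ e * f) := by
  rw [mulTpow, dif_pos h]
  rfl

lemma exists_mulTpow_comp_eq {a b n : ℕ} (ha : 2 ≤ a) (hb : 2 ≤ b) (han : a ≤ n)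
    (φ : J k n →ₗ[k[X]] J k b) (hφ : ∀ x, (X : k[X]) ^ 2 • φ x = 0) :
    ∃ ψ : J k n →ₗ[k[X]] J k a, mulTpow k a b (b - 2) ∘ₗ ψ = φ := by
  obtain ⟨f, hf⟩ := exists_eq_mk_X_pow_mul hb _ (hφ (Submodule.Quotient.mk 1))
  refine ⟨lift (Submodule.Quotient.mk f) (X_pow_smul_mk_eq_zero han f), hom_ext ?_⟩
  rw [LinearMap.comp_apply, lift_mk, one_smul, mulTpow_mk (by omega), hf]

lemma exists_comp_mulTpow_eq {a b n : ℕ} (ha : 2 ≤ a) (hb : 2 ≤ b) (hbn : b ≤ n)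
    (φ : J k a →ₗ[k[X]] J k n) (hφ : ∀ x, (X : k[X]) ^ 2 • φ x = 0) :
    ∃ E : J k b →ₗ[k[X]] J k n, E ∘ₗ mulTpow k a b (b - 2) = φ := by
  obtain ⟨f, hf⟩ := exists_eq_mk_X_pow_mul (hb.trans hbn) _ (hφ (Submodule.Quotient.mk 1))
  have hy : (X : k[X]) ^ b • (Submodule.Quotient.mk (X ^ (n - b) * f) : J k n) = 0 := by
    rw [← Submodule.Quotient.mk_smul, smul_eq_mul, ← mul_assoc, ← pow_add,
      Nat.add_sub_cancel' hbn, ← smul_eq_mul, Submodule.Quotient.mk_smul,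
      X_pow_smul_mk_eq_zero le_rfl]
  refine ⟨lift _ hy, hom_ext ?_⟩
  rw [LinearMap.comp_apply, mulTpow_mk (by omega), lift_mk, hf, ← Submodule.Quotient.mk_smul,
    smul_eq_mul, mul_one, ← mul_assoc, ← pow_add]
  congr 3
  omega

lemma exists_mulTpow_comp_eq_pi {ι : Type*} [Fintype ι] [DecidableEq ι] {a b : ℕ}
    (ha : 2 ≤ a) (hb : 2 ≤ b) {p : ι → ℕ} (hp : ∀ i, a ≤ p i)
    (φ : ((i : ι) → J k (p i)) →ₗ[k[X]] J k b) (hφ : ∀ x, (X : k[X]) ^ 2 • φ x = 0) :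
    ∃ ψ : ((i : ι) → J k (p i)) →ₗ[k[X]] J k a, mulTpow k a b (b - 2) ∘ₗ ψ = φ := by
  choose ψ hψ using fun i ↦ exists_mulTpow_comp_eq ha hb (hp i)
    (φ ∘ₗ LinearMap.single k[X] (fun i ↦ J k (p i)) i) fun _ ↦ hφ _
  refine ⟨LinearMap.lsum k[X] _ k[X] ψ, LinearMap.pi_ext' fun i ↦ ?_⟩
  rw [LinearMap.comp_assoc, ← hψ i]
  congr 1
  exact LinearMap.ext fun x ↦ LinearMap.lsum_piSingle _ _ k[X] ψ i x

lemma exists_comp_mulTpow_eq_pi {ι : Type*} {a b : ℕ} (ha : 2 ≤ a) (hb : 2 ≤ b)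
    {q : ι → ℕ} (hq : ∀ j, b ≤ q j)
    (φ : J k a →ₗ[k[X]] ((j : ι) → J k (q j))) (hφ : ∀ x, (X : k[X]) ^ 2 • φ x = 0) :
    ∃ E : J k b →ₗ[k[X]] ((j : ι) → J k (q j)), E ∘ₗ mulTpow k a b (b - 2) = φ := by
  choose E hE using fun j ↦
    exists_comp_mulTpow_eq ha hb (hq j) (LinearMap.proj j ∘ₗ φ) fun x ↦ congrFun (hφ x) j
  exact ⟨LinearMap.pi E, LinearMap.ext fun x ↦ funext fun j ↦ LinearMap.congr_fun (hE j) x⟩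

lemma exists_linearEquiv_mulTpow_comp_eq {a b : ℕ} (ha : 2 ≤ a) (hb : 2 ≤ b)
    (c : J k a →ₗ[k[X]] J k b) (hc : ∀ x, (X : k[X]) ^ 2 • c x = 0)
    (hXc : ¬ ∀ x, (X : k[X]) • c x = 0) :
    ∃ μ : J k a ≃ₗ[k[X]] J k a, mulTpow k a b (b - 2) ∘ₗ μ.toLinearMap = c := by
  obtain ⟨g, hg⟩ := exists_eq_mk_X_pow_mul hb _ (hc (Submodule.Quotient.mk 1))
  have hXg : ¬ X ∣ g := by
    rintro ⟨g', rfl⟩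
    refine hXc fun x ↦ ?_
    obtain ⟨f, rfl⟩ := Submodule.Quotient.mk_surjective _ x
    have hX : X * (X ^ (b - 2) * (X * g')) = X ^ b * g' := by
      conv_rhs => rw [← Nat.sub_add_cancel hb, pow_add]
      ring
    rw [← mul_one f, ← smul_eq_mul, Submodule.Quotient.mk_smul, map_smul, hg, smul_comm,
      ← Submodule.Quotient.mk_smul, smul_eq_mul, hX, ← smul_eq_mul, Submodule.Quotient.mk_smul,
      X_pow_smul_mk_eq_zero le_rfl, smul_zero]
  obtain ⟨u, v, huv⟩ : IsCoprime ((X : k[X]) ^ a) g :=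
    (irreducible_X.coprime_iff_not_dvd.mpr hXg).pow_left
  have hvg : (Submodule.Quotient.mk (v * g) : J k a) = Submodule.Quotient.mk 1 :=
    (Submodule.Quotient.eq _).mpr (Ideal.mem_span_singleton.mpr ⟨-u, by linear_combination huv⟩)
  refine ⟨LinearEquiv.ofLinearMap (lift _ (X_pow_smul_mk_eq_zero le_rfl g))
    (lift _ (X_pow_smul_mk_eq_zero le_rfl v)) (hom_ext ?_) (hom_ext ?_), hom_ext ?_⟩
  all_goals simp only [LinearMap.comp_apply, LinearEquiv.coe_coe, LinearEquiv.coe_ofLinearMap,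
    lift_mk, one_smul, LinearMap.id_apply, ← Submodule.Quotient.mk_smul, smul_eq_mul]
  · exact hvg
  · rw [mul_comm, hvg]
  · rw [mulTpow_mk (by omega), hg]

end

open LinearMap in
lemma exists_comp_eq_prodMap_of_blocks {R M₁ M₂ N₁ N₂ : Type*} [Ring R]
    [AddCommGroup M₁] [Module R M₁] [AddCommGroup M₂] [Module R M₂]
    [AddCommGroup N₁] [Module R N₁] [AddCommGroup N₂] [Module R N₂]
    (C : M₁ × M₂ →ₗ[R] N₁ × N₂) (τ : M₂ →ₗ[R] N₂) (μ : M₂ ≃ₗ[R] M₂) (F : M₁ →ₗ[R] M₂)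
    (E : N₂ →ₗ[R] N₁) (hc : ∀ t, (C (0, t)).2 = τ (μ t)) (hD : ∀ x, (C (x, 0)).2 = τ (F x))
    (hB : ∀ t, (C (0, t)).1 = E (C (0, t)).2) :
    ∃ (α : (M₁ × M₂) ≃ₗ[R] (M₁ × M₂)) (β : (N₁ × N₂) ≃ₗ[R] (N₁ × N₂)),
      β.toLinearMap ∘ₗ C =
        ((fst R N₁ N₂ ∘ₗ C ∘ₗ inl R M₁ M₂ - E ∘ₗ snd R N₁ N₂ ∘ₗ C ∘ₗ inl R M₁ M₂).prodMap τ) ∘ₗ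
          α.toLinearMap := by
  refine ⟨(LinearEquiv.refl R M₁).skewProd μ F,
    ((LinearEquiv.prodComm R N₁ N₂).trans ((LinearEquiv.refl R N₂).skewProd
      (LinearEquiv.refl R N₁) (-E))).trans (LinearEquiv.prodComm R N₂ N₁), ?_⟩
  ext x <;> simp [hc, hD, hB, ← sub_eq_add_neg]

/-- Splitting off a `(J_a, J_b, T^{b-2})` summand: with `a, b ≥ 2`, all `p_i ≥ a`,
all `q_j ≥ b`, if `C : X' ⊕ J_a → Y' ⊕ J_b` satisfies `T² ∘ C = 0` and the component
`c : J_a → J_b` between the distinguished summands has `T ∘ c ≠ 0`, then after suitable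
isomorphisms `C` is the direct sum of a map `C' : X' → Y'` (with `T² ∘ C' = 0`) and
multiplication by `T^{b-2} : J_a → J_b`. -/
theorem split_off_Ja_Jb (k : Type*) [Field k] (a b : ℕ) (ha : 2 ≤ a) (hb : 2 ≤ b)
    (r s : ℕ) (p : Fin r → ℕ) (q : Fin s → ℕ)
    (hp : ∀ i, a ≤ p i) (hq : ∀ j, b ≤ q j)
    (C : (((i : Fin r) → J k (p i)) × J k a) →ₗ[Polynomial k]
      (((j : Fin s) → J k (q j)) × J k b))
    (hC : ∀ x, ((X : Polynomial k) ^ 2) • C x = 0)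
    (hcomp : ¬ ∀ x : J k a,
      (X : Polynomial k) •
        ((LinearMap.snd (Polynomial k) ((j : Fin s) → J k (q j)) (J k b))
          (C ((LinearMap.inr (Polynomial k) ((i : Fin r) → J k (p i)) (J k a)) x))) = 0) :
    ∃ C' : ((i : Fin r) → J k (p i)) →ₗ[Polynomial k] ((j : Fin s) → J k (q j)),
      (∀ x, ((X : Polynomial k) ^ 2) • C' x = 0) ∧
      ∃ (α : (((i : Fin r) → J k (p i)) × J k a) ≃ₗ[Polynomial k]
          (((i : Fin r) → J k (p i)) × J k a))
        (β : (((j : Fin s) → J k (q j)) × J k b) ≃ₗ[Polynomial k]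
          (((j : Fin s) → J k (q j)) × J k b)),
        β.toLinearMap ∘ₗ C = (C'.prodMap (mulTpow k a b (b - 2))) ∘ₗ α.toLinearMap := by
  have hC₁ : ∀ x, (X : k[X]) ^ 2 • (C x).1 = 0 := fun x ↦ congrArg Prod.fst (hC x)
  have hC₂ : ∀ x, (X : k[X]) ^ 2 • (C x).2 = 0 := fun x ↦ congrArg Prod.snd (hC x)
  obtain ⟨μ, hμ⟩ := exists_linearEquiv_mulTpow_comp_eq ha hb
    (LinearMap.snd _ _ _ ∘ₗ C ∘ₗ LinearMap.inr _ _ _) (fun _ ↦ hC₂ _) hcomp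
  obtain ⟨F, hF⟩ := exists_mulTpow_comp_eq_pi ha hb hp
    (LinearMap.snd _ _ _ ∘ₗ C ∘ₗ LinearMap.inl _ _ _) (fun _ ↦ hC₂ _)
  obtain ⟨E, hE⟩ := exists_comp_mulTpow_eq_pi ha hb hq
    (LinearMap.fst _ _ _ ∘ₗ C ∘ₗ LinearMap.inr _ _ _ ∘ₗ μ.symm.toLinearMap) (fun _ ↦ hC₁ _)
  have hB : ∀ t, (C (0, t)).1 = E (C (0, t)).2 := fun t ↦ by
    have hEt := LinearMap.congr_fun hE (μ t)
    have hμt := LinearMap.congr_fun hμ t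
    simp only [LinearMap.coe_comp, Function.comp_apply, LinearMap.coe_fst, LinearMap.coe_snd,
      LinearMap.coe_inr, LinearEquiv.coe_coe, LinearEquiv.symm_apply_apply] at hEt hμt
    rw [← hμt, hEt]
  refine ⟨_, fun x ↦ ?_, exists_comp_eq_prodMap_of_blocks C _ μ F E
    (fun t ↦ (LinearMap.congr_fun hμ t).symm) (fun x ↦ (LinearMap.congr_fun hF x).symm) hB⟩
  simp [smul_sub, hC₁, ← map_smul, hC₂]
end
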